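/- arXiv:2304.03120 — 3 statements merged into one kernel-verified Lean document; each statement's English description precedes it below -/
import Mathlib

section
/- For all real k, 1/(1 + (7/40)k²) ≤ η̂(k) ≤ 1/(1 + (1/20)k²), where η̂(k) = 6(k - sin(k))/k³ for k ≠ 0 and η̂(0) = 1. -/
noncomputable def etaHat (k : ℝ) : ℝ :=
  if k = 0 then 1 else 6 * (k - Real.sin k) / k ^ 3

lemma aux_nonneg (f : ℝ → ℝ) (hf : Differentiable ℝ f) (h0 : f 0 = 0)
    (hd : ∀ x, 0 ≤ x → 0 ≤ deriv f x) : ∀ x, 0 ≤ x → 0 ≤ f x := by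
  intro x hx
  have hm : MonotoneOn f (Set.Ici (0:ℝ)) := by
    apply monotoneOn_of_deriv_nonneg (convex_Ici 0) hf.continuous.continuousOn
      hf.differentiableOn
    intro y hy
    rw [interior_Ici] at hy
    exact hd y (le_of_lt hy)
  have := hm Set.self_mem_Ici hx hx
  linarith [h0 ▸ this]

lemma sin_ge_taylor3 (x : ℝ) (hx : 0 ≤ x) : x - x^3/6 ≤ Real.sin x := by
  have := aux_nonneg (fun x => Real.sin x - (x - x^3/6))
    (by fun_prop) (by simp)
    (fun y _ => by
      have h1 : HasDerivAt (fun x : ℝ => Real.sin x - (x - x^3/6))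
          (Real.cos y - (1 - 3*y^2/6)) y :=
        (Real.hasDerivAt_sin y).sub ((hasDerivAt_id y).sub
          ((hasDerivAt_pow 3 y).div_const 6))
      rw [h1.deriv]
      have := Real.one_sub_sq_div_two_le_cos (x := y)
      linarith) x hx
  linarith

lemma cos_le_taylor4 (x : ℝ) (hx : 0 ≤ x) : Real.cos x ≤ 1 - x^2/2 + x^4/24 := by
  have := aux_nonneg (fun x => 1 - x^2/2 + x^4/24 - Real.cos x)
    (by fun_prop) (by simp)
    (fun y hy => by
      have h1 : HasDerivAt (fun x : ℝ => 1 - x^2/2 + x^4/24 - Real.cos x)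
          (0 - 2*y^1/2 + 4*y^3/24 - (-Real.sin y)) y :=
        (((hasDerivAt_const y (1:ℝ)).sub ((hasDerivAt_pow 2 y).div_const 2)).add
          ((hasDerivAt_pow 4 y).div_const 24)).sub (Real.hasDerivAt_cos y)
      rw [h1.deriv]
      have := sin_ge_taylor3 y hy
      nlinarith [pow_nonneg hy 3, pow_nonneg hy 1]) x hx
  linarith

lemma sin_le_taylor5 (x : ℝ) (hx : 0 ≤ x) : Real.sin x ≤ x - x^3/6 + x^5/120 := by
  have := aux_nonneg (fun x => x - x^3/6 + x^5/120 - Real.sin x)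
    (by fun_prop) (by simp)
    (fun y hy => by
      have h1 : HasDerivAt (fun x : ℝ => x - x^3/6 + x^5/120 - Real.sin x)
          (1 - 3*y^2/6 + 5*y^4/120 - Real.cos y) y :=
        (((hasDerivAt_id y).sub ((hasDerivAt_pow 3 y).div_const 6)).add
          ((hasDerivAt_pow 5 y).div_const 120)).sub (Real.hasDerivAt_sin y)
      rw [h1.deriv]
      have := cos_le_taylor4 y hy
      nlinarith) x hx
  linarith

lemma cos_ge_taylor6 (x : ℝ) (hx : 0 ≤ x) : 1 - x^2/2 + x^4/24 - x^6/720 ≤ Real.cos x := by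
  have := aux_nonneg (fun x => Real.cos x - (1 - x^2/2 + x^4/24 - x^6/720))
    (by fun_prop) (by simp)
    (fun y hy => by
      have h1 : HasDerivAt (fun x : ℝ => Real.cos x - (1 - x^2/2 + x^4/24 - x^6/720))
          (-Real.sin y - (0 - 2*y^1/2 + 4*y^3/24 - 6*y^5/720)) y :=
        (Real.hasDerivAt_cos y).sub ((((hasDerivAt_const y (1:ℝ)).sub
          ((hasDerivAt_pow 2 y).div_const 2)).add
          ((hasDerivAt_pow 4 y).div_const 24)).sub ((hasDerivAt_pow 6 y).div_const 720))
      rw [h1.deriv]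
      have := sin_le_taylor5 y hy
      nlinarith) x hx
  linarith

lemma sin_ge_taylor7 (x : ℝ) (hx : 0 ≤ x) :
    x - x^3/6 + x^5/120 - x^7/5040 ≤ Real.sin x := by
  have := aux_nonneg (fun x => Real.sin x - (x - x^3/6 + x^5/120 - x^7/5040))
    (by fun_prop) (by simp)
    (fun y hy => by
      have h1 : HasDerivAt (fun x : ℝ => Real.sin x - (x - x^3/6 + x^5/120 - x^7/5040))
          (Real.cos y - (1 - 3*y^2/6 + 5*y^4/120 - 7*y^6/5040)) y :=
        (Real.hasDerivAt_sin y).sub ((((hasDerivAt_id y).sub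
          ((hasDerivAt_pow 3 y).div_const 6)).add
          ((hasDerivAt_pow 5 y).div_const 120)).sub ((hasDerivAt_pow 7 y).div_const 5040))
      rw [h1.deriv]
      have := cos_ge_taylor6 y hy
      nlinarith) x hx
  linarith

lemma cos_mid (x : ℝ) (hx1 : (0.425:ℝ) ≤ x) (hx2 : x ≤ 3.65) : Real.cos x ≤ 0.99 := by
  have hpl : (3.14:ℝ) < Real.pi := Real.pi_gt_d2
  have hpu : Real.pi < 3.15 := Real.pi_lt_d2
  rcases le_or_gt x (Real.pi/2) with hc | hc
  · have hmono : Real.cos x ≤ Real.cos 0.425 :=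
      Real.cos_le_cos_of_nonneg_of_le_pi (by norm_num) (by linarith) hx1
    have hb := Real.cos_bound (x := 0.425) (by rw [abs_of_nonneg] <;> norm_num)
    rw [abs_of_nonneg (by norm_num : (0:ℝ) ≤ 0.425)] at hb
    have := (abs_sub_le_iff.mp hb).1
    nlinarith
  · have : Real.cos x ≤ 0 :=
      Real.cos_nonpos_of_pi_div_two_le_of_le hc.le (by linarith)
    linarith

lemma sin_mid (k : ℝ) (h1 : 8.3 ≤ k) (h2 : k ≤ 11.5) : Real.sin k ≤ 0.99 := by
  have hpl : (3.14:ℝ) < Real.pi := Real.pi_gt_d2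
  have hpu : Real.pi < 3.15 := Real.pi_lt_d2
  have hs : Real.sin k = Real.cos (k - 5*Real.pi/2) := by
    rw [show k - 5*Real.pi/2 = (k - Real.pi/2) - 2*Real.pi by ring, Real.cos_sub_two_pi,
      show k - Real.pi/2 = -(Real.pi/2 - k) by ring, Real.cos_neg, Real.cos_pi_div_two_sub]
  rw [hs]
  exact cos_mid _ (by linarith) (by linarith)

lemma lower_pos (k : ℝ) (hk : 0 < k) :
    1 * k^3 ≤ 6 * (k - Real.sin k) * (1 + (7/40) * k^2) := by
  have hp : (0:ℝ) ≤ 1 + (7/40)*k^2 := by positivity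
  rcases le_or_gt k 3.7 with h | h
  · have ht := sin_le_taylor5 k hk.le
    have key : k^3 ≤ 6*(k^3/6 - k^5/120)*(1+(7/40)*k^2) := by
      nlinarith [mul_nonneg (pow_nonneg hk.le 5) (by nlinarith : (0:ℝ) ≤ 100 - 7*k^2)]
    nlinarith [mul_le_mul_of_nonneg_right
      (show 6*(k^3/6 - k^5/120) ≤ 6*(k - Real.sin k) by linarith) hp]
  rcases le_or_gt k 8.3 with h2 | h2
  · have hs := Real.sin_le_one k
    have key : k^3 ≤ 6*(k-1)*(1+(7/40)*k^2) := by
      nlinarith [mul_nonneg (by linarith : (0:ℝ) ≤ k - 3.7) (by linarith : (0:ℝ) ≤ 8.3 - k),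
        sq_nonneg (k-6),
        mul_nonneg (mul_nonneg (by linarith : (0:ℝ) ≤ k - 3.7)
          (by linarith : (0:ℝ) ≤ 8.3 - k)) (by linarith : (0:ℝ) ≤ k)]
    nlinarith [mul_le_mul_of_nonneg_right
      (show 6*(k-1) ≤ 6*(k - Real.sin k) by linarith) hp]
  rcases le_or_gt k 11.5 with h3 | h3
  · have hs := sin_mid k h2.le h3
    have key : k^3 ≤ 6*(k-0.99)*(1+(7/40)*k^2) := by
      nlinarith [mul_nonneg (by linarith : (0:ℝ) ≤ k - 8.3) (by linarith : (0:ℝ) ≤ 11.5 - k),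
        sq_nonneg (k-9.8),
        mul_nonneg (mul_nonneg (by linarith : (0:ℝ) ≤ k - 8.3)
          (by linarith : (0:ℝ) ≤ 11.5 - k)) (by linarith : (0:ℝ) ≤ k)]
    nlinarith [mul_le_mul_of_nonneg_right
      (show 6*(k-0.99) ≤ 6*(k - Real.sin k) by linarith) hp]
  · have hs := Real.sin_le_one k
    have key : k^3 ≤ 6*(k-1)*(1+(7/40)*k^2) := by
      nlinarith [sq_nonneg (k - 11.5),
        mul_nonneg (sq_nonneg (k-11.5)) (by linarith : (0:ℝ) ≤ k - 11.5)]
    nlinarith [mul_le_mul_of_nonneg_right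
      (show 6*(k-1) ≤ 6*(k - Real.sin k) by linarith) hp]

lemma upper_pos (k : ℝ) (hk : 0 < k) :
    6 * (k - Real.sin k) * (1 + (1/20) * k^2) ≤ 1 * k^3 := by
  have hp : (0:ℝ) ≤ 1 + (1/20)*k^2 := by positivity
  rcases le_or_gt k 4.6 with h | h
  · have ht := sin_ge_taylor7 k hk.le
    have key : 6*(k^3/6 - k^5/120 + k^7/5040)*(1+(1/20)*k^2) ≤ k^3 := by
      nlinarith [mul_nonneg (pow_nonneg hk.le 7) (by nlinarith : (0:ℝ) ≤ 22 - k^2),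
        pow_nonneg hk.le 9, pow_nonneg hk.le 5]
    nlinarith [mul_le_mul_of_nonneg_right
      (show 6*(k - Real.sin k) ≤ 6*(k^3/6 - k^5/120 + k^7/5040) by linarith) hp]
  · have hs := Real.neg_one_le_sin k
    have key : 6*(k+1)*(1+(1/20)*k^2) ≤ k^3 := by
      nlinarith [sq_nonneg (k-4.6),
        mul_nonneg (sq_nonneg (k-4.6)) (by linarith : (0:ℝ) ≤ k - 4.6)]
    nlinarith [mul_le_mul_of_nonneg_right
      (show 6*(k - Real.sin k) ≤ 6*(k+1) by linarith) hp]

lemma etaHat_bounds_pos (k : ℝ) (hk : 0 < k) :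
    1 / (1 + (7 / 40) * k ^ 2) ≤ etaHat k ∧ etaHat k ≤ 1 / (1 + (1 / 20) * k ^ 2) := by
  rw [etaHat, if_neg hk.ne']
  constructor
  · rw [div_le_div_iff₀ (by positivity) (by positivity)]
    exact lower_pos k hk
  · rw [div_le_div_iff₀ (by positivity) (by positivity)]
    exact upper_pos k hk

theorem stmt_1 (k : ℝ) :
    1 / (1 + (7 / 40) * k ^ 2) ≤ etaHat k ∧ etaHat k ≤ 1 / (1 + (1 / 20) * k ^ 2) := by
  rcases lt_trichotomy k 0 with hk | hk | hk
  · have he : etaHat k = etaHat (-k) := by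
      rw [etaHat, etaHat, if_neg hk.ne, if_neg (neg_ne_zero.mpr hk.ne)]
      rw [Real.sin_neg]
      ring
    have h := etaHat_bounds_pos (-k) (by linarith)
    rw [he, show k^2 = (-k)^2 by ring]
    exact h
  · subst hk
    norm_num [etaHat]
  · exact etaHat_bounds_pos k hk
end

section
/- The function g(k) := (7/60)k³ - k + (1 + k²/20)·sin(k) is nonnegative for all k ≥ 0. -/
/-!
For `0 ≤ k ≤ 4` replace `sin k` by its Taylor lower bound `k - k³/6 + k⁵/120 - k⁷/5040`: the
terms of degree up to five cancel exactly and what remains is `k⁷ (22 - k²) / 100800 ≥ 0`.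
For `k > 4` the bound `sin k ≥ -1` already suffices, the cubic term dominating.
The Taylor bound is the case `n = 3` of the alternating bounds for the partial sums of the sine
and cosine series on `[0, ∞)`, obtained by integrating `cos x ≤ 1` repeatedly.
-/

open Finset Real

open scoped Nat

noncomputable def sinTaylor (n : ℕ) (x : ℝ) : ℝ :=
  ∑ i ∈ range n, (-1) ^ i * x ^ (2 * i + 1) / (2 * i + 1)!

noncomputable def cosTaylor (n : ℕ) (x : ℝ) : ℝ :=
  ∑ i ∈ range n, (-1) ^ i * x ^ (2 * i) / (2 * i)!

theorem hasDerivAt_pow_succ_div_factorial (m : ℕ) (c x : ℝ) :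
    HasDerivAt (fun t => c * t ^ (m + 1) / (m + 1)!) (c * x ^ m / m !) x := by
  refine (((hasDerivAt_pow (m + 1) x).const_mul c).div_const ((m + 1)! : ℝ)).congr_deriv ?_
  rw [Nat.factorial_succ]
  push_cast
  field_simp

theorem hasDerivAt_sinTaylor (n : ℕ) (x : ℝ) :
    HasDerivAt (sinTaylor n) (cosTaylor n x) x := by
  unfold sinTaylor cosTaylor
  exact HasDerivAt.fun_sum fun i _ => hasDerivAt_pow_succ_div_factorial (2 * i) _ x

theorem hasDerivAt_cosTaylor_succ (n : ℕ) (x : ℝ) :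
    HasDerivAt (cosTaylor (n + 1)) (-sinTaylor n x) x := by
  have hshift : cosTaylor (n + 1) = fun t => ∑ i ∈ range n,
      (-1 : ℝ) ^ (i + 1) * t ^ (2 * i + 1 + 1) / (2 * i + 1 + 1)! + 1 := by
    ext t
    simp [cosTaylor, sum_range_succ' _ n, mul_add]
  rw [hshift]
  refine (HasDerivAt.fun_sum fun i _ =>
    hasDerivAt_pow_succ_div_factorial (2 * i + 1) _ x).add_const _ |>.congr_deriv ?_
  simp [sinTaylor, pow_succ, neg_div]

theorem nonneg_of_hasDerivAt_nonneg {f f' : ℝ → ℝ} (hf : ∀ x, HasDerivAt f (f' x) x)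
    (h₀ : f 0 = 0) (hf' : ∀ x, 0 ≤ x → 0 ≤ f' x) {x : ℝ} (hx : 0 ≤ x) : 0 ≤ f x := by
  have hmono : MonotoneOn f (Set.Ici 0) :=
    monotoneOn_of_hasDerivWithinAt_nonneg (convex_Ici 0)
      (fun y _ => (hf y).continuousAt.continuousWithinAt) (fun y _ => (hf y).hasDerivWithinAt)
      (fun y hy => hf' y (interior_subset hy))
  exact h₀ ▸ hmono Set.self_mem_Ici hx hx

theorem sin_sub_sinTaylor_alternating_of_cos {n : ℕ}
    (hcos : ∀ x, 0 ≤ x → 0 ≤ (-1) ^ (n + 1) * (cos x - cosTaylor (n + 1) x))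
    {x : ℝ} (hx : 0 ≤ x) : 0 ≤ (-1) ^ (n + 1) * (sin x - sinTaylor (n + 1) x) :=
  nonneg_of_hasDerivAt_nonneg
    (fun y => ((hasDerivAt_sin y).sub (hasDerivAt_sinTaylor _ y)).const_mul _)
    (by simp [sinTaylor]) hcos hx

theorem cos_sub_cosTaylor_alternating (n : ℕ) {x : ℝ} (hx : 0 ≤ x) :
    0 ≤ (-1) ^ (n + 1) * (cos x - cosTaylor (n + 1) x) := by
  induction n generalizing x with
  | zero => simpa [cosTaylor] using cos_le_one x
  | succ n ih =>
    refine nonneg_of_hasDerivAt_nonneg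
      (fun y => ((hasDerivAt_cos y).sub (hasDerivAt_cosTaylor_succ _ y)).const_mul _)
      (by simp [cosTaylor, sum_range_succ']) (fun y hy => ?_) hx
    have := sin_sub_sinTaylor_alternating_of_cos (fun z hz => ih hz) hy
    convert this using 1
    ring

theorem sin_sub_sinTaylor_alternating (n : ℕ) {x : ℝ} (hx : 0 ≤ x) :
    0 ≤ (-1) ^ (n + 1) * (sin x - sinTaylor (n + 1) x) :=
  sin_sub_sinTaylor_alternating_of_cos (fun _ hy => cos_sub_cosTaylor_alternating n hy) hx

theorem sinTaylor_four (x : ℝ) :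
    sinTaylor 4 x = x - x ^ 3 / 6 + x ^ 5 / 120 - x ^ 7 / 5040 := by
  simp only [sinTaylor, sum_range_succ, sum_range_zero]
  norm_num [Nat.factorial]
  ring

theorem sinTaylor_four_le_sin {x : ℝ} (hx : 0 ≤ x) : sinTaylor 4 x ≤ sin x := by
  have h := sin_sub_sinTaylor_alternating 3 hx
  norm_num at h
  linarith

theorem stmt_3 (k : ℝ) (hk : 0 ≤ k) :
    0 ≤ (7 / 60) * k ^ 3 - k + (1 + k ^ 2 / 20) * Real.sin k := by
  have hweight : 0 ≤ 1 + k ^ 2 / 20 := by positivity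
  rcases le_or_gt k 4 with hk4 | hk4
  · have hsin := mul_le_mul_of_nonneg_left (sinTaylor_four_le_sin hk) hweight
    rw [sinTaylor_four] at hsin
    have hrest : 0 ≤ k ^ 7 * (22 - k ^ 2) := mul_nonneg (pow_nonneg hk 7) (by nlinarith)
    have hcancel : (7 / 60) * k ^ 3 - k +
        (1 + k ^ 2 / 20) * (k - k ^ 3 / 6 + k ^ 5 / 120 - k ^ 7 / 5040) =
        k ^ 7 * (22 - k ^ 2) / 100800 := by ring
    linarith
  · have hsin := mul_le_mul_of_nonneg_left (neg_one_le_sin k) hweight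
    have hcubic : 0 ≤ (7 / 60) * k ^ 3 - k - (1 + k ^ 2 / 20) := by
      nlinarith [mul_pos (mul_pos (sub_pos.2 hk4) (sub_pos.2 hk4)) (sub_pos.2 hk4)]
    linarith
end

section
/- Let m, R > 0 and n ∈ ℕ₀. Then |∂ᵣⁿ ∫₁^∞ e^(−mrp)(p²−1)^(−1/2) dp| ≤ C₁ C₂ⁿ n! e^(−mr) for all r ≥ R, where C₁ = √2 + 1/(√3 mR) and C₂ = 2 max{m, 1/R}. -/
open MeasureTheory Real Set Filter

/-- integrability of `p^k e^{-msp} (p²-1)^{-1/2}` on `(1,∞)` -/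
lemma int_aux (m s : ℝ) (hms : 0 < m * s) (k : ℕ) :
    IntegrableOn (fun p : ℝ => p ^ k * Real.exp (-(m * s * p)) * (p ^ 2 - 1) ^ (-(1 / 2) : ℝ))
      (Ioi 1) := by
  have hmeas : Measurable (fun p : ℝ =>
      p ^ k * Real.exp (-(m * s * p)) * (p ^ 2 - 1) ^ (-(1 / 2) : ℝ)) := by
    fun_prop
  rw [← Ioc_union_Ioi_eq_Ioi (by norm_num : (1:ℝ) ≤ 2), integrableOn_union]
  constructor
  · -- Ioc 1 2
    have hint : IntegrableOn (fun p : ℝ => 2 ^ k * (p - 1) ^ (-(1 / 2) : ℝ)) (Ioc 1 2) := by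
      have h := (intervalIntegral.intervalIntegrable_rpow'
        (a := 0) (b := 1) (r := (-(1/2) : ℝ)) (by norm_num)).comp_sub_right 1
      norm_num at h
      exact ((intervalIntegrable_iff_integrableOn_Ioc_of_le (by norm_num)).mp h).const_mul _
    refine hint.mono' hmeas.aestronglyMeasurable ?_
    refine (ae_restrict_iff' measurableSet_Ioc).2 (ae_of_all _ fun p hp => ?_)
    have hp1 : (1:ℝ) < p := hp.1
    have hb : (0:ℝ) < p - 1 := by linarith
    have hb2 : (0:ℝ) < p ^ 2 - 1 := by nlinarith
    rw [Real.norm_eq_abs, abs_mul, abs_mul, abs_of_nonneg (by positivity),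
      abs_of_nonneg (Real.exp_pos _).le, abs_of_nonneg (Real.rpow_nonneg hb2.le _)]
    have h1 : p ^ k ≤ 2 ^ k := pow_le_pow_left₀ (by linarith) hp.2 k
    have h2 : Real.exp (-(m * s * p)) ≤ 1 := by
      rw [Real.exp_le_one_iff]; nlinarith
    have h3 : (p ^ 2 - 1) ^ (-(1 / 2) : ℝ) ≤ (p - 1) ^ (-(1 / 2) : ℝ) :=
      Real.rpow_le_rpow_of_nonpos hb (by nlinarith) (by norm_num)
    calc p ^ k * Real.exp (-(m * s * p)) * (p ^ 2 - 1) ^ (-(1 / 2) : ℝ)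
        ≤ 2 ^ k * 1 * (p - 1) ^ (-(1 / 2) : ℝ) := by
          apply mul_le_mul (mul_le_mul h1 h2 (Real.exp_pos _).le (by positivity)) h3
            (Real.rpow_nonneg hb2.le _) (by positivity)
      _ = 2 ^ k * (p - 1) ^ (-(1 / 2) : ℝ) := by ring
  · -- Ioi 2
    have hint : IntegrableOn (fun p : ℝ => p ^ k * Real.exp (-(m * s * p))) (Ioi 2) := by
      have h := integrableOn_rpow_mul_exp_neg_mul_rpow (s := (k:ℝ)) (p := 1) (b := m * s)
        ((by norm_num : (-1:ℝ) < 0).trans_le (Nat.cast_nonneg k)) zero_lt_one hms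
      have h2 : IntegrableOn (fun p : ℝ => p ^ k * Real.exp (-(m * s * p))) (Ioi 0) := by
        refine h.congr_fun (fun p hp => ?_) measurableSet_Ioi
        simp only [Real.rpow_one, Real.rpow_natCast]
        ring_nf
      exact h2.mono_set (Ioi_subset_Ioi (by norm_num))
    refine hint.mono' hmeas.aestronglyMeasurable ?_
    refine (ae_restrict_iff' measurableSet_Ioi).2 (ae_of_all _ fun p hp => ?_)
    have hp2 : (2:ℝ) < p := hp
    have hb2 : (1:ℝ) ≤ p ^ 2 - 1 := by nlinarith
    rw [Real.norm_eq_abs, abs_mul, abs_mul, abs_of_nonneg (by positivity),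
      abs_of_nonneg (Real.exp_pos _).le, abs_of_nonneg (Real.rpow_nonneg (by linarith) _)]
    calc p ^ k * Real.exp (-(m * s * p)) * (p ^ 2 - 1) ^ (-(1 / 2) : ℝ)
        ≤ p ^ k * Real.exp (-(m * s * p)) * 1 :=
          mul_le_mul_of_nonneg_left (Real.rpow_le_one_of_one_le_of_nonpos hb2 (by norm_num))
            (by positivity)
      _ = p ^ k * Real.exp (-(m * s * p)) := mul_one _

lemma norm_aux (m x : ℝ) (hm : 0 < m) (k : ℕ) (p : ℝ) (hp : 1 < p) :
    ‖(-(m * p)) ^ k * Real.exp (-(m * x * p)) * (p ^ 2 - 1) ^ (-(1 / 2) : ℝ)‖ =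
      m ^ k * (p ^ k * Real.exp (-(m * x * p)) * (p ^ 2 - 1) ^ (-(1 / 2) : ℝ)) := by
  have hb2 : (0:ℝ) < p ^ 2 - 1 := by nlinarith
  rw [Real.norm_eq_abs, abs_mul, abs_mul, abs_pow, abs_neg,
    abs_of_nonneg (by positivity : (0:ℝ) ≤ m * p), abs_of_nonneg (Real.exp_pos _).le,
    abs_of_nonneg (Real.rpow_nonneg hb2.le _), mul_pow]
  ring

lemma int_aux2 (m s : ℝ) (hm : 0 < m) (hs : 0 < s) (n : ℕ) :
    IntegrableOn (fun p : ℝ =>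
      (-(m * p)) ^ n * Real.exp (-(m * s * p)) * (p ^ 2 - 1) ^ (-(1 / 2) : ℝ)) (Ioi 1) := by
  have h := (int_aux m s (by positivity) n).const_mul ((-1 : ℝ) ^ n * m ^ n)
  exact MeasureTheory.IntegrableOn.congr_fun h (fun p hp => by ring) measurableSet_Ioi

noncomputable def G (m : ℝ) (n : ℕ) (s : ℝ) : ℝ :=
  ∫ p in Ioi (1:ℝ), (-(m * p)) ^ n * Real.exp (-(m * s * p)) * (p ^ 2 - 1) ^ (-(1 / 2) : ℝ)

lemma hasDeriv_G (m : ℝ) (hm : 0 < m) (n : ℕ) {s : ℝ} (hs : 0 < s) :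
    HasDerivAt (G m n) (G m (n + 1) s) s := by
  have hmeas : ∀ x : ℝ, ∀ k : ℕ, AEStronglyMeasurable (fun p : ℝ =>
      (-(m * p)) ^ k * Real.exp (-(m * x * p)) * (p ^ 2 - 1) ^ (-(1 / 2) : ℝ))
      (volume.restrict (Ioi 1)) := fun x k => by
    exact (by fun_prop : Measurable fun p : ℝ =>
      (-(m * p)) ^ k * Real.exp (-(m * x * p)) *
        (p ^ 2 - 1) ^ (-(1 / 2) : ℝ)).aestronglyMeasurable
  have key := hasDerivAt_integral_of_dominated_loc_of_deriv_le (s := Metric.ball s (s / 2))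
    (F := fun x p => (-(m * p)) ^ n * Real.exp (-(m * x * p)) * (p ^ 2 - 1) ^ (-(1 / 2) : ℝ))
    (F' := fun x p => (-(m * p)) ^ (n + 1) * Real.exp (-(m * x * p)) * (p ^ 2 - 1) ^ (-(1 / 2) : ℝ))
    (bound := fun p => m ^ (n + 1) *
      (p ^ (n + 1) * Real.exp (-(m * (s / 2) * p)) * (p ^ 2 - 1) ^ (-(1 / 2) : ℝ)))
    (μ := volume.restrict (Ioi 1)) (x₀ := s) (Metric.ball_mem_nhds s (half_pos hs))
    (Filter.Eventually.of_forall fun x => hmeas x n)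
    (int_aux2 m s hm hs n) (hmeas s (n + 1)) ?_
    ((int_aux m (s / 2) (by positivity) (n + 1)).const_mul _) ?_
  · exact key.2
  · refine (ae_restrict_iff' measurableSet_Ioi).2 (ae_of_all _ fun p hp x hx => ?_)
    have hp1 : (1:ℝ) < p := hp
    rw [norm_aux m x hm (n + 1) p hp1]
    have hx2 : s / 2 ≤ x := by
      rw [Metric.mem_ball, Real.dist_eq] at hx
      have := abs_lt.1 hx
      linarith [this.1]
    have hexp : Real.exp (-(m * x * p)) ≤ Real.exp (-(m * (s / 2) * p)) := by
      apply Real.exp_le_exp.2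
      nlinarith [mul_nonneg (mul_nonneg hm.le (by linarith : (0:ℝ) ≤ x - s / 2))
        (by linarith : (0:ℝ) ≤ p)]
    have hw : (0:ℝ) ≤ (p ^ 2 - 1) ^ (-(1 / 2) : ℝ) :=
      Real.rpow_nonneg (by nlinarith : (0:ℝ) ≤ p ^ 2 - 1) _
    exact mul_le_mul_of_nonneg_left (mul_le_mul_of_nonneg_right
      (mul_le_mul_of_nonneg_left hexp (pow_nonneg (by linarith) _)) hw)
      (pow_nonneg hm.le _)
  · refine (ae_restrict_iff' measurableSet_Ioi).2 (ae_of_all _ fun p hp x hx => ?_)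
    have h0 : HasDerivAt (fun y : ℝ => -(m * y * p)) (-(m * p)) x := by
      have h := hasDerivAt_mul_const (x := x) (-(m * p))
      have he : (fun y : ℝ => y * (-(m * p))) = fun y : ℝ => -(m * y * p) := by
        funext y; ring
      rwa [he] at h
    have h1 := (h0.exp.const_mul ((-(m * p)) ^ n)).mul_const ((p ^ 2 - 1) ^ (-(1 / 2) : ℝ))
    have heq : (-(m * p)) ^ (n + 1) * Real.exp (-(m * x * p)) * (p ^ 2 - 1) ^ (-(1 / 2) : ℝ)
        = (-(m * p)) ^ n * (Real.exp (-(m * x * p)) * -(m * p)) * (p ^ 2 - 1) ^ (-(1 / 2) : ℝ) := by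
      ring
    show HasDerivAt (fun y : ℝ => (-(m * p)) ^ n * Real.exp (-(m * y * p)) *
        (p ^ 2 - 1) ^ (-(1 / 2) : ℝ))
      ((-(m * p)) ^ (n + 1) * Real.exp (-(m * x * p)) * (p ^ 2 - 1) ^ (-(1 / 2) : ℝ)) x
    rw [heq]
    exact h1

lemma iter_G (m : ℝ) (hm : 0 < m) (n : ℕ) :
    ∀ s ∈ Ioi (0:ℝ), iteratedDeriv n (G m 0) s = G m n s := by
  induction n with
  | zero => intro s _; simp [iteratedDeriv_zero]
  | succ n ih =>
    intro s hs
    rw [iteratedDeriv_succ]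
    have hev : iteratedDeriv n (G m 0) =ᶠ[nhds s] G m n :=
      (isOpen_Ioi.eventually_mem hs).mono fun x hx => ih x hx
    rw [hev.deriv_eq]
    exact (hasDeriv_G m hm n hs).deriv

lemma shift_Ioi (f : ℝ → ℝ) : ∫ p in Ioi (1:ℝ), f (p - 1) = ∫ t in Ioi (0:ℝ), f t := by
  rw [← integral_indicator measurableSet_Ioi, ← integral_indicator measurableSet_Ioi,
    ← integral_sub_right_eq_self (Set.indicator (Ioi (0:ℝ)) f) 1]
  congr 1
  funext x
  by_cases hx : 1 < x
  · rw [indicator_of_mem (mem_Ioi.2 hx), indicator_of_mem (mem_Ioi.2 (by linarith))]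
  · rw [indicator_of_notMem (fun h => hx (mem_Ioi.1 h)),
      indicator_of_notMem (fun h => hx (by have := mem_Ioi.1 h; linarith))]

lemma shift_int (f : ℝ → ℝ) (hf : IntegrableOn f (Ioi 0)) :
    IntegrableOn (fun p => f (p - 1)) (Ioi 1) := by
  rw [← integrable_indicator_iff measurableSet_Ioi] at hf ⊢
  have h := hf.comp_sub_right 1
  have he : (fun x : ℝ => Set.indicator (Ioi 0) f (x - 1)) =
      Set.indicator (Ioi 1) (fun p => f (p - 1)) := by
    funext x
    by_cases hx : 1 < x
    · rw [indicator_of_mem (mem_Ioi.2 (by linarith : (0:ℝ) < x - 1)),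
        indicator_of_mem (mem_Ioi.2 hx)]
    · rw [indicator_of_notMem (fun h => hx (by have := mem_Ioi.1 h; linarith)),
        indicator_of_notMem (fun h => hx (mem_Ioi.1 h))]
  rwa [he] at h

lemma int_exp (c : ℝ) (hc : 0 < c) (k : ℕ) :
    IntegrableOn (fun t : ℝ => t ^ k * Real.exp (-(c * t))) (Ioi 0) := by
  have h := integrableOn_rpow_mul_exp_neg_mul_rpow (s := (k:ℝ)) (p := 1) (b := c)
    ((by norm_num : (-1:ℝ) < 0).trans_le (Nat.cast_nonneg k)) zero_lt_one hc
  refine h.congr_fun (fun t ht => ?_) measurableSet_Ioi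
  simp only [Real.rpow_one, Real.rpow_natCast]
  ring_nf

lemma int_gamma (c : ℝ) (hc : 0 < c) (k : ℕ) :
    ∫ t in Ioi (0:ℝ), t ^ k * Real.exp (-(c * t)) = (k.factorial : ℝ) / c ^ (k + 1) := by
  have h := integral_rpow_mul_exp_neg_mul_Ioi (a := (k:ℝ) + 1) (by positivity) hc
  simp only [show ((k:ℝ) + 1) - 1 = (k:ℝ) from by ring] at h
  have he : ∫ t in Ioi (0:ℝ), t ^ ((k:ℝ)) * Real.exp (-(c * t))
      = ∫ t in Ioi (0:ℝ), t ^ k * Real.exp (-(c * t)) :=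
    setIntegral_congr_fun measurableSet_Ioi fun t ht => by rw [Real.rpow_natCast]
  rw [he] at h
  rw [h, Real.Gamma_nat_eq_factorial]
  have h2 : ((k:ℝ) + 1) = ((k + 1 : ℕ) : ℝ) := by push_cast; ring
  rw [h2, Real.rpow_natCast, one_div, inv_pow]
  field_simp

lemma rpow_half_int : IntegrableOn (fun p : ℝ => (p - 1) ^ (-(1 / 2) : ℝ)) (Ioc 1 2) := by
  have h := (intervalIntegral.intervalIntegrable_rpow'
    (a := 0) (b := 1) (r := (-(1/2) : ℝ)) (by norm_num)).comp_sub_right 1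
  norm_num at h
  exact (intervalIntegrable_iff_integrableOn_Ioc_of_le (by norm_num)).mp h

lemma rpow_half_val : ∫ p in Ioc (1:ℝ) 2, (p - 1) ^ (-(1 / 2) : ℝ) = 2 := by
  rw [← intervalIntegral.integral_of_le (by norm_num : (1:ℝ) ≤ 2),
    intervalIntegral.integral_comp_sub_right (fun x => x ^ (-(1/2) : ℝ)) 1]
  norm_num
  rw [integral_rpow (Or.inl (by norm_num))]
  rw [Real.one_rpow, Real.zero_rpow (by norm_num)]
  norm_num

theorem stmt_19 (m R : ℝ) (hm : 0 < m) (hR : 0 < R) (n : ℕ) (r : ℝ) (hr : R ≤ r) :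
    |iteratedDeriv n
        (fun s : ℝ => ∫ p in Set.Ioi (1 : ℝ),
          Real.exp (-(m * s * p)) * (p ^ 2 - 1) ^ (-(1 / 2) : ℝ)) r| ≤
      (Real.sqrt 2 + 1 / (Real.sqrt 3 * m * R)) * (2 * max m (1 / R)) ^ n *
        (n.factorial : ℝ) * Real.exp (-(m * r)) := by
  have hr0 : 0 < r := hR.trans_le hr
  have hF : (fun s : ℝ => ∫ p in Set.Ioi (1 : ℝ),
      Real.exp (-(m * s * p)) * (p ^ 2 - 1) ^ (-(1 / 2) : ℝ)) = G m 0 := by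
    funext s
    exact (setIntegral_congr_fun measurableSet_Ioi fun p hp => by simp).symm
  rw [hF, iter_G m hm n r (mem_Ioi.2 hr0)]
  set E := Real.exp (-(m * r)) with hE
  set M := max m (1 / R) with hM
  have hE0 : 0 < E := Real.exp_pos _
  have hMm : m ≤ M := le_max_left _ _
  have hMR : 1 / R ≤ M := le_max_right _ _
  have hM0 : 0 < M := hm.trans_le hMm
  have hfac : (1:ℝ) ≤ (n.factorial : ℝ) := by exact_mod_cast n.factorial_pos
  have hint : IntegrableOn
      (fun p : ℝ => p ^ n * Real.exp (-(m * r * p)) * (p ^ 2 - 1) ^ (-(1 / 2) : ℝ)) (Ioi 1) :=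
    int_aux m r (by positivity) n
  -- step 1 : bound by the integral of the absolute value
  have h1 : |G m n r| ≤ m ^ n *
      ∫ p in Ioi (1:ℝ), p ^ n * Real.exp (-(m * r * p)) * (p ^ 2 - 1) ^ (-(1 / 2) : ℝ) := by
    rw [← integral_const_mul]
    calc |G m n r| ≤ ∫ p in Ioi (1:ℝ),
        ‖(-(m * p)) ^ n * Real.exp (-(m * r * p)) * (p ^ 2 - 1) ^ (-(1 / 2) : ℝ)‖ := by
          rw [← Real.norm_eq_abs]; exact norm_integral_le_integral_norm _
      _ = ∫ p in Ioi (1:ℝ),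
          m ^ n * (p ^ n * Real.exp (-(m * r * p)) * (p ^ 2 - 1) ^ (-(1 / 2) : ℝ)) :=
          setIntegral_congr_fun measurableSet_Ioi fun p hp => norm_aux m r hm n p hp
  -- split the integral
  have hsplit : (∫ p in Ioi (1:ℝ), p ^ n * Real.exp (-(m * r * p)) * (p ^ 2 - 1) ^ (-(1 / 2) : ℝ))
      = (∫ p in Ioc (1:ℝ) 2, p ^ n * Real.exp (-(m * r * p)) * (p ^ 2 - 1) ^ (-(1 / 2) : ℝ))
      + ∫ p in Ioi (2:ℝ), p ^ n * Real.exp (-(m * r * p)) * (p ^ 2 - 1) ^ (-(1 / 2) : ℝ) := by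
    rw [← setIntegral_union (Ioc_disjoint_Ioi le_rfl) measurableSet_Ioi
      (hint.mono_set Ioc_subset_Ioi_self) (hint.mono_set (Ioi_subset_Ioi one_le_two)),
      Ioc_union_Ioi_eq_Ioi (by norm_num : (1:ℝ) ≤ 2)]
  -- near part
  have hJ1 : (∫ p in Ioc (1:ℝ) 2, p ^ n * Real.exp (-(m * r * p)) * (p ^ 2 - 1) ^ (-(1 / 2) : ℝ))
      ≤ 2 ^ n * E * Real.sqrt 2 := by
    have hb : ∀ p ∈ Ioc (1:ℝ) 2,
        p ^ n * Real.exp (-(m * r * p)) * (p ^ 2 - 1) ^ (-(1 / 2) : ℝ)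
        ≤ 2 ^ n * E * ((2:ℝ) ^ (-(1/2) : ℝ) * (p - 1) ^ (-(1 / 2) : ℝ)) := by
      intro p hp
      have hp1 : (1:ℝ) < p := hp.1
      have hb2 : (0:ℝ) < p ^ 2 - 1 := by nlinarith
      have hpn : p ^ n ≤ 2 ^ n := pow_le_pow_left₀ (by linarith) hp.2 n
      have hexp : Real.exp (-(m * r * p)) ≤ E := by
        rw [hE]; apply Real.exp_le_exp.2
        nlinarith [mul_nonneg (mul_pos hm hr0).le (by linarith : (0:ℝ) ≤ p - 1)]
      have hw : (p ^ 2 - 1) ^ (-(1 / 2) : ℝ)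
          ≤ (2:ℝ) ^ (-(1/2) : ℝ) * (p - 1) ^ (-(1 / 2) : ℝ) := by
        calc (p ^ 2 - 1) ^ (-(1 / 2) : ℝ) ≤ (2 * (p - 1)) ^ (-(1 / 2) : ℝ) :=
            Real.rpow_le_rpow_of_nonpos (by linarith) (by nlinarith) (by norm_num)
          _ = (2:ℝ) ^ (-(1/2) : ℝ) * (p - 1) ^ (-(1 / 2) : ℝ) :=
            Real.mul_rpow (by norm_num) (by linarith)
      calc p ^ n * Real.exp (-(m * r * p)) * (p ^ 2 - 1) ^ (-(1 / 2) : ℝ)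
          ≤ (2 ^ n * E) * ((2:ℝ) ^ (-(1/2) : ℝ) * (p - 1) ^ (-(1 / 2) : ℝ)) := by
            apply mul_le_mul (mul_le_mul hpn hexp (Real.exp_pos _).le (by positivity)) hw
              (Real.rpow_nonneg hb2.le _) (by positivity)
        _ = 2 ^ n * E * ((2:ℝ) ^ (-(1/2) : ℝ) * (p - 1) ^ (-(1 / 2) : ℝ)) := by ring
    have hmono := setIntegral_mono_on (hint.mono_set Ioc_subset_Ioi_self)
      ((rpow_half_int.const_mul _).const_mul _) measurableSet_Ioc hb
    refine hmono.trans ?_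
    rw [integral_const_mul, integral_const_mul, rpow_half_val]
    have h2 : (2:ℝ) ^ (-(1/2) : ℝ) * 2 = Real.sqrt 2 := by
      rw [Real.rpow_neg (by norm_num), ← Real.sqrt_eq_rpow]
      have hs2 : (0:ℝ) < Real.sqrt 2 := Real.sqrt_pos.2 (by norm_num)
      field_simp
      exact (Real.sq_sqrt (by norm_num)).symm
    rw [h2]
  -- far part
  have hφint : IntegrableOn (fun p : ℝ => (p - 1) ^ n * Real.exp (-(m * r * (p - 1)))) (Ioi 1) :=
    shift_int (fun t => t ^ n * Real.exp (-(m * r * t))) (int_exp (m * r) (by positivity) n)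
  have hJ2 : (∫ p in Ioi (2:ℝ), p ^ n * Real.exp (-(m * r * p)) * (p ^ 2 - 1) ^ (-(1 / 2) : ℝ))
      ≤ 1 / Real.sqrt 3 * (2 ^ n * E) * ((n.factorial : ℝ) / (m * r) ^ (n + 1)) := by
    have hs3 : (0:ℝ) < Real.sqrt 3 := Real.sqrt_pos.2 (by norm_num)
    have hb : ∀ p ∈ Ioi (2:ℝ),
        p ^ n * Real.exp (-(m * r * p)) * (p ^ 2 - 1) ^ (-(1 / 2) : ℝ)
        ≤ 1 / Real.sqrt 3 * (2 ^ n * E) * ((p - 1) ^ n * Real.exp (-(m * r * (p - 1)))) := by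
      intro p hp
      have hp2 : (2:ℝ) < p := hp
      have hw : (p ^ 2 - 1) ^ (-(1 / 2) : ℝ) ≤ 1 / Real.sqrt 3 := by
        calc (p ^ 2 - 1) ^ (-(1 / 2) : ℝ) ≤ (3:ℝ) ^ (-(1/2) : ℝ) :=
            Real.rpow_le_rpow_of_nonpos (by norm_num) (by nlinarith) (by norm_num)
          _ = 1 / Real.sqrt 3 := by
            rw [Real.rpow_neg (by norm_num), ← Real.sqrt_eq_rpow, one_div]
      have hpn : p ^ n ≤ 2 ^ n * (p - 1) ^ n := by
        calc p ^ n ≤ (2 * (p - 1)) ^ n := pow_le_pow_left₀ (by linarith) (by linarith) n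
          _ = 2 ^ n * (p - 1) ^ n := mul_pow _ _ _
      have hexp : Real.exp (-(m * r * p)) = E * Real.exp (-(m * r * (p - 1))) := by
        rw [hE, ← Real.exp_add]; congr 1; ring
      calc p ^ n * Real.exp (-(m * r * p)) * (p ^ 2 - 1) ^ (-(1 / 2) : ℝ)
          = p ^ n * (E * Real.exp (-(m * r * (p - 1)))) * (p ^ 2 - 1) ^ (-(1 / 2) : ℝ) := by
            rw [hexp]
        _ ≤ (2 ^ n * (p - 1) ^ n) * (E * Real.exp (-(m * r * (p - 1)))) * (1 / Real.sqrt 3) := by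
            refine mul_le_mul (mul_le_mul_of_nonneg_right hpn
                (mul_nonneg hE0.le (Real.exp_pos _).le))
              hw (Real.rpow_nonneg (by nlinarith) _)
              (mul_nonneg (mul_nonneg (by positivity) (pow_nonneg (by linarith) n))
                (mul_nonneg hE0.le (Real.exp_pos _).le))
        _ = 1 / Real.sqrt 3 * (2 ^ n * E) * ((p - 1) ^ n * Real.exp (-(m * r * (p - 1)))) := by
            ring
    have hmono := setIntegral_mono_on (hint.mono_set (Ioi_subset_Ioi one_le_two))
      ((hφint.mono_set (Ioi_subset_Ioi one_le_two)).const_mul _) measurableSet_Ioi hb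
    refine hmono.trans ?_
    rw [integral_const_mul]
    have hmono2 : (∫ p in Ioi (2:ℝ), (p - 1) ^ n * Real.exp (-(m * r * (p - 1))))
        ≤ ∫ p in Ioi (1:ℝ), (p - 1) ^ n * Real.exp (-(m * r * (p - 1))) := by
      apply setIntegral_mono_set hφint
      · refine (ae_restrict_iff' measurableSet_Ioi).2 (ae_of_all _ fun p hp => ?_)
        have hp1 : (1:ℝ) < p := hp
        exact mul_nonneg (pow_nonneg (by linarith) _) (Real.exp_pos _).le
      · exact HasSubset.Subset.eventuallyLE (Ioi_subset_Ioi one_le_two)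
    have hval : (∫ p in Ioi (1:ℝ), (p - 1) ^ n * Real.exp (-(m * r * (p - 1))))
        = (n.factorial : ℝ) / (m * r) ^ (n + 1) := by
      rw [shift_Ioi (fun t => t ^ n * Real.exp (-(m * r * t)))]
      exact int_gamma (m * r) (by positivity) n
    calc 1 / Real.sqrt 3 * (2 ^ n * E) *
        (∫ p in Ioi (2:ℝ), (p - 1) ^ n * Real.exp (-(m * r * (p - 1))))
        ≤ 1 / Real.sqrt 3 * (2 ^ n * E) *
          (∫ p in Ioi (1:ℝ), (p - 1) ^ n * Real.exp (-(m * r * (p - 1)))) := by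
          apply mul_le_mul_of_nonneg_left hmono2 (by positivity)
      _ = 1 / Real.sqrt 3 * (2 ^ n * E) * ((n.factorial : ℝ) / (m * r) ^ (n + 1)) := by
          rw [hval]
  -- combine
  have hs2 : (0:ℝ) < Real.sqrt 2 := Real.sqrt_pos.2 (by norm_num)
  have hs3 : (0:ℝ) < Real.sqrt 3 := Real.sqrt_pos.2 (by norm_num)
  have t1 : m ^ n * (2 ^ n * E * Real.sqrt 2)
      ≤ Real.sqrt 2 * ((2 * M) ^ n * ((n.factorial : ℝ) * E)) := by
    have k1 : m ^ n * 2 ^ n ≤ (2 * M) ^ n * (n.factorial : ℝ) := by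
      calc m ^ n * 2 ^ n = (2 * m) ^ n := by rw [mul_pow]; ring
        _ ≤ (2 * M) ^ n := pow_le_pow_left₀ (by positivity) (by linarith) n
        _ = (2 * M) ^ n * 1 := (mul_one _).symm
        _ ≤ (2 * M) ^ n * (n.factorial : ℝ) :=
            mul_le_mul_of_nonneg_left hfac (by positivity)
    calc m ^ n * (2 ^ n * E * Real.sqrt 2) = m ^ n * 2 ^ n * (E * Real.sqrt 2) := by ring
      _ ≤ (2 * M) ^ n * (n.factorial : ℝ) * (E * Real.sqrt 2) :=
          mul_le_mul_of_nonneg_right k1 (by positivity)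
      _ = Real.sqrt 2 * ((2 * M) ^ n * ((n.factorial : ℝ) * E)) := by ring
  have t2 : m ^ n * (1 / Real.sqrt 3 * (2 ^ n * E) * ((n.factorial : ℝ) / (m * r) ^ (n + 1)))
      ≤ 1 / (Real.sqrt 3 * m * R) * ((2 * M) ^ n * ((n.factorial : ℝ) * E)) := by
    have key : m ^ n / (m * r) ^ (n + 1) * 2 ^ n ≤ (2 * M) ^ n / (m * R) := by
      have e1 : m ^ n / (m * r) ^ (n + 1) * 2 ^ n = (2 / r) ^ n * (1 / (m * r)) := by
        rw [mul_pow, pow_succ, div_pow]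
        field_simp
        ring
      have e2 : (2 / r) ^ n ≤ (2 * M) ^ n := by
        apply pow_le_pow_left₀ (by positivity)
        have hrm : 1 / r ≤ M := (one_div_le_one_div_of_le hR hr).trans hMR
        calc 2 / r = 2 * (1 / r) := by ring
          _ ≤ 2 * M := by linarith
      have e3 : 1 / (m * r) ≤ 1 / (m * R) :=
        one_div_le_one_div_of_le (by positivity) (mul_le_mul_of_nonneg_left hr hm.le)
      calc m ^ n / (m * r) ^ (n + 1) * 2 ^ n = (2 / r) ^ n * (1 / (m * r)) := e1
        _ ≤ (2 * M) ^ n * (1 / (m * R)) :=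
          mul_le_mul e2 e3 (by positivity) (by positivity)
        _ = (2 * M) ^ n / (m * R) := by ring
    calc m ^ n * (1 / Real.sqrt 3 * (2 ^ n * E) * ((n.factorial : ℝ) / (m * r) ^ (n + 1)))
        = (m ^ n / (m * r) ^ (n + 1) * 2 ^ n) * ((n.factorial : ℝ) * E) * (1 / Real.sqrt 3) := by
          ring
      _ ≤ ((2 * M) ^ n / (m * R)) * ((n.factorial : ℝ) * E) * (1 / Real.sqrt 3) :=
          mul_le_mul_of_nonneg_right
            (mul_le_mul_of_nonneg_right key (by positivity)) (by positivity)
      _ = 1 / (Real.sqrt 3 * m * R) * ((2 * M) ^ n * ((n.factorial : ℝ) * E)) := by ring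
  calc |G m n r|
      ≤ m ^ n * ∫ p in Ioi (1:ℝ),
        p ^ n * Real.exp (-(m * r * p)) * (p ^ 2 - 1) ^ (-(1 / 2) : ℝ) := h1
    _ = m ^ n * ((∫ p in Ioc (1:ℝ) 2,
          p ^ n * Real.exp (-(m * r * p)) * (p ^ 2 - 1) ^ (-(1 / 2) : ℝ))
        + ∫ p in Ioi (2:ℝ),
          p ^ n * Real.exp (-(m * r * p)) * (p ^ 2 - 1) ^ (-(1 / 2) : ℝ)) := by rw [hsplit]
    _ ≤ m ^ n * ((2 ^ n * E * Real.sqrt 2)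
        + 1 / Real.sqrt 3 * (2 ^ n * E) * ((n.factorial : ℝ) / (m * r) ^ (n + 1))) := by
          apply mul_le_mul_of_nonneg_left (add_le_add hJ1 hJ2) (by positivity)
    _ = m ^ n * (2 ^ n * E * Real.sqrt 2)
        + m ^ n * (1 / Real.sqrt 3 * (2 ^ n * E) * ((n.factorial : ℝ) / (m * r) ^ (n + 1))) := by
          ring
    _ ≤ Real.sqrt 2 * ((2 * M) ^ n * ((n.factorial : ℝ) * E))
        + 1 / (Real.sqrt 3 * m * R) * ((2 * M) ^ n * ((n.factorial : ℝ) * E)) := add_le_add t1 t2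
    _ = (Real.sqrt 2 + 1 / (Real.sqrt 3 * m * R)) * (2 * M) ^ n * (n.factorial : ℝ) * E := by
          ring
end
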